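/- Let p be an odd prime, and let r, t be non-negative integers with r ≥ t, r - t even, and t_0 ≠ p - 1 (where t_0 is the 0-th base-p digit of t). If (N, σ, δ, I) is an admissible quadruple for the pair (r, t) with N ≥ 1, then either 0 ∈ I and σ_0 = p - 1 - t_0, or 0 ∉ I and σ_0 = t_0 + 1. -/

import Mathlib

/-- The `i`-th digit of the base-`p` expansion of `n`. -/
def digit (p n i : ℕ) : ℕ := n / p ^ i % p

/-- `σ_I = ∑_{i ∈ I} p^i σ_i`. -/
def digitSum (p σ : ℕ) (I : Finset ℕ) : ℕ := ∑ i ∈ I, p ^ i * digit p σ i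

/-- An admissible triple `(N, σ, δ)`. -/
def AdmissibleTriple (p N σ δ : ℕ) : Prop :=
  σ < p ^ (N + 1) - p ^ N ∧ δ < p ^ (N + 1) - p ^ N ∧
  (∀ i < N, digit p σ i + digit p δ i ≤ p - 1) ∧
  digit p σ N + digit p δ N < p - 1

/-- An admissible quadruple `(N, σ, δ, I)`. -/
def AdmissibleQuadruple (p N σ δ : ℕ) (I : Finset ℕ) : Prop :=
  AdmissibleTriple p N σ δ ∧ ∀ i ∈ I, digit p σ i ≠ 0 ∧ i ≠ N

/-- An admissible quadruple for the pair `(r, t)`. -/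
def AdmissibleQuadrupleFor (p r t N σ δ : ℕ) (I : Finset ℕ) : Prop :=
  AdmissibleQuadruple p N σ δ I ∧
  t + 2 * digitSum p σ I = p ^ N - 1 + σ ∧
  r ≡ p ^ N - 1 + σ + 2 * δ [MOD 2 * p ^ (N + 1)]

/-!
Reduce the identity `t + 2 σ_I = (p^N - 1) + σ` modulo `p`. Since `N ≥ 1`, `p^N` vanishes,
and `σ_I ≡ σ_0` or `0` according as `0 ∈ I` or not, leaving
`t_0 + 2 σ_0 + 1 ≡ σ_0` or `t_0 + 1 ≡ σ_0`. As all digits are `< p`, and `t_0 + 1 < p`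
because `t_0 ≠ p - 1`, these congruences pin down `σ_0`.
-/

theorem digit_zero (p n : ℕ) : digit p n 0 = n % p := by
  simp [digit]

theorem digit_lt {p : ℕ} (hp : 0 < p) (n i : ℕ) : digit p n i < p :=
  Nat.mod_lt _ hp

theorem digitSum_modEq (p σ : ℕ) (I : Finset ℕ) :
    digitSum p σ I ≡ if 0 ∈ I then digit p σ 0 else 0 [MOD p] := by
  simpa [digitSum] using Nat.sum_modEq_ite (a := 0) fun i _ hi =>
    Nat.modEq_zero_iff_dvd.2 (dvd_mul_of_dvd_left (dvd_pow_self p hi) (digit p σ i))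

theorem digit_zero_add_two_mul_add_one_modEq {p t σ N : ℕ} {I : Finset ℕ} (hp : p ≠ 0)
    (hN : N ≠ 0) (h : t + 2 * digitSum p σ I = p ^ N - 1 + σ) :
    digit p t 0 + 2 * (if 0 ∈ I then digit p σ 0 else 0) + 1 ≡ digit p σ 0 [MOD p] := by
  have hpN : p ^ N ≡ 0 [MOD p] := Nat.modEq_zero_iff_dvd.2 (dvd_pow_self p hN)
  have hpos : 0 < p ^ N := Nat.pow_pos (Nat.pos_of_ne_zero hp)
  calc digit p t 0 + 2 * (if 0 ∈ I then digit p σ 0 else 0) + 1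
      ≡ t + 2 * digitSum p σ I + 1 [MOD p] := by
        gcongr
        exacts [digit_zero p t ▸ Nat.mod_modEq t p, (digitSum_modEq p σ I).symm]
    _ = p ^ N + σ := by omega
    _ ≡ 0 + σ [MOD p] := hpN.add_right σ
    _ ≡ digit p σ 0 [MOD p] := by rw [zero_add, digit_zero]; exact (Nat.mod_modEq σ p).symm

theorem eq_sub_of_add_add_one_modEq_zero {p a b : ℕ} (ha : a < p) (hb : b < p)
    (h : a + b + 1 ≡ 0 [MOD p]) : b = p - 1 - a := by
  have hc : p - 1 - a + (a + 1) ≡ 0 [MOD p] := by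
    rw [show p - 1 - a + (a + 1) = p by omega]
    exact Nat.modEq_zero_iff_dvd.2 dvd_rfl
  have : b + (a + 1) ≡ p - 1 - a + (a + 1) [MOD p] := by
    rw [show b + (a + 1) = a + b + 1 by ring]
    exact h.trans hc.symm
  exact (Nat.ModEq.add_right_cancel' _ this).eq_of_lt_of_lt hb (by omega)

theorem stmt_11_general (p : ℕ) (hp : p.Prime) (r t : ℕ)
    (ht0 : digit p t 0 ≠ p - 1)
    (N σ δ : ℕ) (I : Finset ℕ)
    (h : AdmissibleQuadrupleFor p r t N σ δ I) (hN : 1 ≤ N) :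
    (0 ∈ I ∧ digit p σ 0 = p - 1 - digit p t 0) ∨
    (0 ∉ I ∧ digit p σ 0 = digit p t 0 + 1) := by
  have hcong := digit_zero_add_two_mul_add_one_modEq hp.ne_zero (by omega) h.2.1
  have ht := digit_lt hp.pos t 0
  have hσ := digit_lt hp.pos σ 0
  by_cases hI : 0 ∈ I
  · rw [if_pos hI] at hcong
    refine .inl ⟨hI, eq_sub_of_add_add_one_modEq_zero ht hσ ?_⟩
    refine Nat.ModEq.add_right_cancel' (digit p σ 0) ?_
    convert hcong using 1 <;> ring
  · rw [if_neg hI, mul_zero, add_zero] at hcong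
    exact .inr ⟨hI, (hcong.eq_of_lt_of_lt (by omega) hσ).symm⟩

theorem stmt_11 (p : ℕ) (hp : p.Prime) (hodd : Odd p) (r t : ℕ) (hrt : t ≤ r)
    (hev : Even (r - t)) (ht0 : digit p t 0 ≠ p - 1)
    (N σ δ : ℕ) (I : Finset ℕ)
    (h : AdmissibleQuadrupleFor p r t N σ δ I) (hN : 1 ≤ N) :
    (0 ∈ I ∧ digit p σ 0 = p - 1 - digit p t 0) ∨
    (0 ∉ I ∧ digit p σ 0 = digit p t 0 + 1) :=
  stmt_11_general p hp r t ht0 N σ δ I h hN
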